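/- Let μ and ν be probability measures on a measurable space with μ absolutely continuous with respect to ν and finite relative entropy H(μ|ν) := ∫ log(dμ/dν) dμ. Then for every measurable set A with ν(A) > 0, μ(A) ≤ (log 2 + H(μ|ν)) / log(1 + 1/ν(A)). -/

import Mathlib

open MeasureTheory

/-- If `μ ≪ ν` are probability measures with finite relative entropy
`H(μ|ν) = ∫ log(dμ/dν) dμ`, then for every measurable set `A` with `ν(A) > 0`,
`μ(A) ≤ (log 2 + H(μ|ν)) / log(1 + 1/ν(A))`. -/
theorem measure_le_of_relative_entropy
    {Ω : Type*} [MeasurableSpace Ω] (μ ν : Measure Ω)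
    [IsProbabilityMeasure μ] [IsProbabilityMeasure ν] (hac : μ ≪ ν)
    (H : ℝ) (hH : H = ∫ x, Real.log (μ.rnDeriv ν x).toReal ∂μ)
    (hHfin : Integrable (fun x => Real.log (μ.rnDeriv ν x).toReal) μ)
    (A : Set Ω) (hA : MeasurableSet A) (hνA : 0 < ν A) :
    (μ A).toReal ≤ (Real.log 2 + H) / Real.log (1 + 1 / (ν A).toReal) := by
  set q : ℝ := (ν A).toReal with hq
  have hq0 : 0 < q := ENNReal.toReal_pos hνA.ne' (measure_ne_top ν A)
  set t : ℝ := Real.log (1 + 1 / q) with ht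
  have ht0 : 0 < t := Real.log_pos (by have := one_div_pos.mpr hq0; linarith)
  have hexp : Real.exp t = 1 + 1 / q := Real.exp_log (by positivity)
  set f : Ω → ℝ := fun x => (μ.rnDeriv ν x).toReal with hf
  have hfmeas : Measurable f := (Measure.measurable_rnDeriv μ ν).ennreal_toReal
  -- the "tilting" function e
  set e : Ω → ℝ := fun x => A.indicator (fun _ => Real.exp t - 1) x + 1 with he
  have he_nonneg : ∀ x, 0 < e x := by
    intro x
    have : 0 ≤ A.indicator (fun _ => Real.exp t - 1) x := by
      apply Set.indicator_nonneg
      intro y _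
      have := Real.one_le_exp ht0.le
      linarith
    simp only [he]; linarith
  have he_meas : Measurable e :=
    (Measurable.indicator measurable_const hA).add measurable_const
  have he_ind_int : Integrable (A.indicator (fun _ => Real.exp t - 1)) ν :=
    (integrable_const _).indicator hA
  have he_int : Integrable e ν := he_ind_int.add (integrable_const 1)
  have he_integral : ∫ x, e x ∂ν = 2 := by
    rw [integral_add he_ind_int (integrable_const 1)]
    rw [integral_indicator_const _ hA, integral_const]
    simp only [measureReal_def, measure_univ, ENNReal.toReal_one, smul_eq_mul, one_mul, one_smul, ← hq]
    rw [hexp]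
    field_simp
    ring
  set h : Ω → ℝ := fun x => e x / f x with hhdef
  -- pointwise: f x • h x ≤ e x and 0 ≤ f x • h x
  have hfh_le : ∀ x, f x • h x ≤ e x := by
    intro x
    simp only [smul_eq_mul, hhdef]
    rcases eq_or_ne (f x) 0 with h0 | h0
    · rw [h0]; simpa using (he_nonneg x).le
    · rw [mul_div_cancel₀ _ h0]
  have hfh_nonneg : ∀ x, 0 ≤ f x • h x := by
    intro x
    have hf0 : 0 ≤ f x := ENNReal.toReal_nonneg
    have := (he_nonneg x).le
    simp only [smul_eq_mul, hhdef]
    positivity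
  -- integrability of h w.r.t. μ
  have hfh_int : Integrable (fun x => f x • h x) ν := by
    refine he_int.mono' ?_ ?_
    · exact ((hfmeas.smul (he_meas.div hfmeas))).aestronglyMeasurable
    · refine Filter.Eventually.of_forall fun x => ?_
      rw [Real.norm_eq_abs, abs_of_nonneg (hfh_nonneg x)]
      exact hfh_le x
  have hh_int : Integrable h μ := (integrable_rnDeriv_smul_iff hac).mp hfh_int
  -- ∫ h dμ ≤ 2
  have hc_le : ∫ x, h x ∂μ ≤ 2 := by
    rw [← integral_rnDeriv_smul hac (f := h)]
    calc ∫ x, f x • h x ∂ν ≤ ∫ x, e x ∂ν :=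
          integral_mono_ae hfh_int he_int (Filter.Eventually.of_forall hfh_le)
      _ = 2 := he_integral
  -- a.e. positivity and finiteness of rnDeriv under μ
  have hpos : ∀ᵐ x ∂μ, 0 < μ.rnDeriv ν x := Measure.rnDeriv_pos hac
  have hfin : ∀ᵐ x ∂μ, μ.rnDeriv ν x < ⊤ := hac.ae_le (Measure.rnDeriv_lt_top μ ν)
  have hfpos : ∀ᵐ x ∂μ, 0 < f x := by
    filter_upwards [hpos, hfin] with x h1 h2
    exact ENNReal.toReal_pos h1.ne' h2.ne
  -- log h = t·1_A - log f  a.e.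
  have hlog_eq : ∀ᵐ x ∂μ, Real.log (h x) = A.indicator (fun _ => t) x - Real.log (f x) := by
    filter_upwards [hfpos] with x hx
    simp only [hhdef]
    rw [Real.log_div (he_nonneg x).ne' hx.ne']
    congr 1
    by_cases hxA : x ∈ A
    · simp only [he, Set.indicator_of_mem hxA]
      rw [show Real.exp t - 1 + 1 = Real.exp t by ring, Real.log_exp]
    · simp [he, Set.indicator_of_notMem hxA]
  have hind_int : Integrable (A.indicator (fun _ => t)) μ :=
    (integrable_const _).indicator hA
  have hlog_int : Integrable (fun x => Real.log (h x)) μ := by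
    refine (hind_int.sub hHfin).congr ?_
    filter_upwards [hlog_eq] with x hx
    exact hx.symm
  have hlog_integral : ∫ x, Real.log (h x) ∂μ = t * (μ A).toReal - H := by
    rw [integral_congr_ae hlog_eq, integral_sub hind_int hHfin, ← hH,
      integral_indicator_const _ hA, smul_eq_mul, measureReal_def]
    ring
  -- pointwise bound: log (h x) ≤ h x / 2 + (log 2 - 1) a.e.
  have hptwise : ∀ᵐ x ∂μ, Real.log (h x) ≤ h x / 2 + (Real.log 2 - 1) := by
    filter_upwards [hfpos] with x hx
    have hhx : 0 < h x := div_pos (he_nonneg x) hx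
    have h2 : 0 < h x / 2 := by positivity
    have := Real.log_le_sub_one_of_pos h2
    rw [Real.log_div hhx.ne' (by norm_num)] at this
    linarith
  have hmain : t * (μ A).toReal - H ≤ Real.log 2 := by
    rw [← hlog_integral]
    calc ∫ x, Real.log (h x) ∂μ
        ≤ ∫ x, (h x / 2 + (Real.log 2 - 1)) ∂μ :=
          integral_mono_ae hlog_int ((hh_int.div_const 2).add (integrable_const _)) hptwise
      _ = (∫ x, h x ∂μ) / 2 + (Real.log 2 - 1) := by
          rw [integral_add (hh_int.div_const 2) (integrable_const _), integral_div,
            integral_const]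
          simp [measure_univ]
      _ ≤ 2 / 2 + (Real.log 2 - 1) := by
          have := hc_le; linarith
      _ = Real.log 2 := by ring
  rw [le_div_iff₀ ht0]
  linarith
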